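/- arXiv:math/0301301 — 2 statements merged into one kernel-verified Lean document; each statement's English description precedes it below -/
import Mathlib

section
/- For a > 1/8 and τ > 0, the eigenvalues of the Jacobian of the Lorenz–Euler map at the fixed point (√a, a) are a non-real complex-conjugate pair, and their common modulus is strictly less than 1 if and only if τ < 1/(2a), equal to 1 if and only if τ = 1/(2a), and strictly greater than 1 if and only if τ > 1/(2a). In particular the Hopf bifurcation of (√a, a) occurs at τ = 1/(2a). -/
lemma stmt_7_aux (a τ r : ℝ) (ha : 1 / 8 < a) (hτ : 0 < τ) (hr : 0 ≤ r)
    (h : r ^ 2 = 1 - τ + 2 * a * τ ^ 2) :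
    (r < 1 ↔ τ < 1 / (2 * a)) ∧ (r = 1 ↔ τ = 1 / (2 * a)) ∧ (1 < r ↔ 1 / (2 * a) < τ) := by
  have ha0 : 0 < a := lt_trans (by norm_num) ha
  have key : r ^ 2 - 1 = τ * (2 * a * τ - 1) := by linarith
  refine ⟨⟨?_, ?_⟩, ⟨?_, ?_⟩, ⟨?_, ?_⟩⟩
  · intro h1
    have h2 : 2 * a * τ - 1 < 0 := by nlinarith
    rw [lt_div_iff₀ (by positivity)]; linarith
  · intro h1
    have h2 : τ * (2 * a) < 1 := (lt_div_iff₀ (by positivity)).1 h1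
    nlinarith
  · intro h1
    have h2 : 2 * a * τ - 1 = 0 := by
      rcases mul_eq_zero.1 (by nlinarith : τ * (2 * a * τ - 1) = 0) with h' | h'
      · linarith
      · exact h'
    field_simp; linarith
  · intro h1
    have h2 : τ * (2 * a) = 1 := by field_simp at h1; linarith
    nlinarith
  · intro h1
    have h2 : 0 < 2 * a * τ - 1 := by nlinarith
    rw [div_lt_iff₀ (by positivity)]; linarith
  · intro h1
    have h2 : 1 < τ * (2 * a) := (div_lt_iff₀ (by positivity)).1 h1
    nlinarith

open Complex in
theorem stmt_7 (a τ : ℝ) (ha : 1 / 8 < a) (hτ : 0 < τ) :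
    (∃ z : ℂ, z ^ 2 - (2 - (τ : ℂ)) * z + (1 - τ + 2 * a * τ ^ 2) = 0) ∧
    ∀ z : ℂ, z ^ 2 - (2 - (τ : ℂ)) * z + (1 - τ + 2 * a * τ ^ 2) = 0 →
      z.im ≠ 0 ∧
      (‖z‖ < 1 ↔ τ < 1 / (2 * a)) ∧
      (‖z‖ = 1 ↔ τ = 1 / (2 * a)) ∧
      (1 < ‖z‖ ↔ 1 / (2 * a) < τ) := by
  have ha0 : 0 < a := lt_trans (by norm_num) ha
  have hD : 0 < τ ^ 2 * (8 * a - 1) / 4 := by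
    have : 0 < 8 * a - 1 := by linarith
    positivity
  set D : ℝ := τ ^ 2 * (8 * a - 1) / 4 with hDdef
  have hsq : Real.sqrt D ^ 2 = D := Real.sq_sqrt hD.le
  constructor
  · refine ⟨⟨(2 - τ) / 2, Real.sqrt D⟩, ?_⟩
    apply Complex.ext <;>
      simp [pow_two, Complex.mul_re, Complex.mul_im, Complex.ofReal_re, Complex.ofReal_im]
    · nlinarith [hsq]
    · ring
  · intro z hz
    have hre := congrArg Complex.re hz
    have him := congrArg Complex.im hz
    simp [pow_two, Complex.mul_re, Complex.mul_im] at hre him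
    have him' : z.im * (2 * z.re - (2 - τ)) = 0 := by linarith [him]
    have hy : z.im ≠ 0 := by
      intro h
      rw [h] at hre
      nlinarith [hre, sq_nonneg (z.re - (2 - τ) / 2)]
    refine ⟨hy, ?_⟩
    have hx : z.re = (2 - τ) / 2 := by
      rcases mul_eq_zero.1 him' with h | h
      · exact absurd h hy
      · linarith
    have habs : ‖z‖ ^ 2 = 1 - τ + 2 * a * τ ^ 2 := by
      rw [Complex.sq_norm, Complex.normSq_apply]
      nlinarith [hre]
    exact stmt_7_aux a τ (‖z‖) ha hτ (norm_nonneg z) habs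
end

section
/- For a = 0.36, the Hopf bifurcation value of the fixed point (0.6, 0.36) of the Lorenz–Euler map is τ = 25/18 ≈ 1.38889; that is, the Jacobian at (0.6, 0.36) has determinant 1 exactly when τ = 25/18 (for τ ≠ 0), and its eigenvalues are then non-real of modulus 1. -/
/-- The Jacobian matrix of the Lorenz–Euler map at the point `(x,y)`. -/
def lorenzJacobian (a τ x y : ℝ) : Matrix (Fin 2) (Fin 2) ℝ :=
  !![1 + a * τ - τ * y, -τ * x; 2 * τ * x, 1 - τ]

theorem stmt_8 :
    (∀ τ : ℝ, τ ≠ 0 →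
      ((lorenzJacobian (9 / 25) τ (3 / 5) (9 / 25)).det = 1 ↔ τ = 25 / 18)) ∧
    (∀ z : ℂ,
      z ^ 2 - (2 - ((25 : ℝ) / 18 : ℂ)) * z +
          ((lorenzJacobian (9 / 25) (25 / 18) (3 / 5) (9 / 25)).det : ℂ) = 0 →
        z.im ≠ 0 ∧ ‖z‖ = 1) := by
  constructor
  · intro τ hτ
    simp only [lorenzJacobian, Matrix.det_fin_two_of]
    constructor
    · intro h
      have : τ * (18 * τ - 25) = 0 := by ring_nf; ring_nf at h; linarith
      rcases mul_eq_zero.mp this with h1 | h1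
      · exact absurd h1 hτ
      · linarith
    · intro h; rw [h]; norm_num
  · intro z hz
    have hdet : (lorenzJacobian (9 / 25) (25 / 18) (3 / 5) (9 / 25)).det = 1 := by
      simp [lorenzJacobian, Matrix.det_fin_two_of]; norm_num
    rw [hdet] at hz
    set x := z.re with hx
    set y := z.im with hy
    have hre : x ^ 2 - y ^ 2 - (11 / 18) * x + 1 = 0 := by
      have := congrArg Complex.re hz
      simp [Complex.ext_iff, pow_two, Complex.mul_re, Complex.mul_im, Complex.sub_re,
        Complex.sub_im, Complex.add_re, Complex.add_im] at this ⊢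
      nlinarith [this]
    have him : y * (2 * x - 11 / 18) = 0 := by
      have := congrArg Complex.im hz
      simp [Complex.ext_iff, pow_two, Complex.mul_re, Complex.mul_im, Complex.sub_re,
        Complex.sub_im, Complex.add_re, Complex.add_im] at this
      nlinarith [this]
    have hyne : y ≠ 0 := by
      intro h0
      rw [h0] at hre
      nlinarith [sq_nonneg (x - 11 / 36), hre]
    refine ⟨hyne, ?_⟩
    have hx2 : x = 11 / 36 := by
      rcases mul_eq_zero.mp him with h | h
      · exact absurd h hyne
      · linarith
    have : x ^ 2 + y ^ 2 = 1 := by nlinarith [hre, hx2]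
    have habs : ‖z‖ = Real.sqrt (x ^ 2 + y ^ 2) := by
      rw [Complex.norm_def, Complex.normSq_apply]; ring_nf; rfl
    rw [habs, this, Real.sqrt_one]
end
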